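/- Let Ω be a semigroup, A an associative algebra, M an A-bimodule, and {T_α: M → A}_{α∈Ω} an O-operator family. Define maps ▷_{α,β}: M×A→A by u ▷_{α,β} a := T_α(u)a − T_{αβ}(u·a) and ◁_{α,β}: A×M→A by a ◁_{α,β} u := aT_β(u) − T_{αβ}(a·u). Then together with the Ω-associative structure u ∗̂_{α,β} v := T_α(u)·v + u·T_β(v) on M, these maps make A into an M-bimodule over the Ω-associative algebra M: specifically, (u ∗̂_{α,β} v) ▷_{αβ,γ} a = u ▷_{α,βγ} (v ▷_{β,γ} a), (u ▷_{α,β} a) ◁_{αβ,γ} v = u ▷_{α,βγ} (a ◁_{β,γ} v), and (a ◁_{α,β} u) ◁_{αβ,γ} v = a ◁_{α,βγ} (u ∗̂_{β,γ} v), for all u,v∈M, a∈A, α,β,γ∈Ω. -/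
import Mathlib


section
variable {k Ω A M : Type*} [Field k] [Mul Ω] [NonUnitalRing A] [Module k A]
  [AddCommGroup M] [Module k M]

/-- `u ∗̂_{α,β} v := T_α(u)·v + u·T_β(v)` on `M`. -/
def oHat (actL : A →ₗ[k] M →ₗ[k] M) (actR : M →ₗ[k] A →ₗ[k] M)
    (T : Ω → M →ₗ[k] A) (α β : Ω) (u v : M) : M :=
  actL (T α u) v + actR u (T β v)

/-- `u ▷_{α,β} a := T_α(u)a − T_{αβ}(u·a)`. -/
def oTri (actR : M →ₗ[k] A →ₗ[k] M) (T : Ω → M →ₗ[k] A) (α β : Ω) (u : M) (a : A) : A :=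
  T α u * a - T (α * β) (actR u a)

/-- `a ◁_{α,β} u := aT_β(u) − T_{αβ}(a·u)`. -/
def oTrl (actL : A →ₗ[k] M →ₗ[k] M) (T : Ω → M →ₗ[k] A) (α β : Ω) (a : A) (u : M) : A :=
  a * T β u - T (α * β) (actL a u)

end

/-- An O-operator family makes `A` a bimodule over the
Ω-associative algebra `(M, ∗̂)` via `▷` and `◁`. -/
theorem oOperatorFamily_bimodule
    {k Ω A M : Type*} [Field k] [Semigroup Ω] [NonUnitalRing A] [Module k A]
    [AddCommGroup M] [Module k M]
    (actL : A →ₗ[k] M →ₗ[k] M) (actR : M →ₗ[k] A →ₗ[k] M)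
    (hb1 : ∀ (a b : A) (m : M), actL (a * b) m = actL a (actL b m))
    (hb2 : ∀ (a : A) (m : M) (b : A), actR (actL a m) b = actL a (actR m b))
    (hb3 : ∀ (m : M) (a b : A), actR (actR m a) b = actR m (a * b))
    (T : Ω → M →ₗ[k] A)
    (hT : ∀ (α β : Ω) (u v : M),
      T α u * T β v = T (α * β) (actL (T α u) v + actR u (T β v))) :
    (∀ (α β γ : Ω) (u v : M) (a : A),
      oTri actR T (α * β) γ (oHat actL actR T α β u v) a
        = oTri actR T α (β * γ) u (oTri actR T β γ v a))
    ∧ (∀ (α β γ : Ω) (u v : M) (a : A),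
      oTrl actL T (α * β) γ (oTri actR T α β u a) v
        = oTri actR T α (β * γ) u (oTrl actL T β γ a v))
    ∧ (∀ (α β γ : Ω) (u v : M) (a : A),
      oTrl actL T (α * β) γ (oTrl actL T α β a u) v
        = oTrl actL T α (β * γ) a (oHat actL actR T β γ u v)) := by
  refine ⟨?_, ?_, ?_⟩ <;> intro α β γ u v a <;>
    simp only [oTri, oTrl, oHat, map_add, map_sub, LinearMap.add_apply, LinearMap.sub_apply,
      map_mul, sub_mul, mul_sub, hT, hb1, hb2, hb3, mul_assoc] <;> simp only [← map_add, ← hT, mul_assoc] <;> simp only [hT, map_add] <;> abel
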